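/- arXiv:2305.11400 — 2 statements merged into one kernel-verified Lean document; each statement's English description precedes it below -/
import Mathlib

section
/- Let E be a real normed vector space and let f, g : E → ℝ be differentiable, strictly convex functions. Suppose a ∈ E is a global minimizer of f, b ∈ E is a global minimizer of g, and a ≠ b. Fix α ∈ (0,1) and define h : E → ℝ by h(θ) = α·f(θ) + (1−α)·g(θ). If θ* ∈ E is a global minimizer of h, then f(θ*) > f(a). -/
/-!
If `f θ* ≤ f a`, then `θ* = a` since a strictly convex function has at most one minimizer,
so `a` would minimize `h`. But `f` is flat to first order at its minimizer `a`, while `g`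
decreases at a linear rate along the segment from `a` to its own minimizer `b ≠ a`; hence `h`
decreases near `a` in the direction of `b`.
-/

open Filter Set Topology AffineMap

section

variable {E : Type*} [AddCommGroup E] [Module ℝ E]

lemma ConvexOn.map_lineMap_le {G : E → ℝ} {a b : E} (hG : ConvexOn ℝ (segment ℝ a b) G)
    {t : ℝ} (ht : t ∈ Icc (0 : ℝ) 1) : G (lineMap a b t) ≤ G a - t * (G a - G b) := by
  have := hG.2 (left_mem_segment ℝ a b) (right_mem_segment ℝ a b) (sub_nonneg.2 ht.2) ht.1
    (sub_add_cancel 1 t)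
  rw [lineMap_apply_module]
  simp only [smul_eq_mul] at this
  linarith

lemma StrictConvexOn.lt_of_isMinOn_of_ne {g : E → ℝ} {s : Set E} (hg : StrictConvexOn ℝ s g)
    {a b : E} (ha : a ∈ s) (hb : b ∈ s) (hmin : IsMinOn g s b) (hab : a ≠ b) : g b < g a :=
  (hmin ha).lt_of_ne fun h => hab <| hg.eq_of_isMinOn (fun _ hx => h ▸ hmin hx) hmin ha hb

end

theorem exists_add_lt_of_hasFDerivAt_zero_of_convexOn {E : Type*} [NormedAddCommGroup E]
    [NormedSpace ℝ E] {F G : E → ℝ} {a b : E} (hF : HasFDerivAt F (0 : E →L[ℝ] ℝ) a)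
    (hG : ConvexOn ℝ (segment ℝ a b) G) (hGab : G b < G a) :
    ∃ θ, F θ + G θ < F a + G a := by
  set ℓ : ℝ → E := ⇑(lineMap a b : ℝ →ᵃ[ℝ] E)
  have hline : HasDerivAt (F ∘ ℓ) 0 0 := by
    simpa using (lineMap_apply_zero a b (k := ℝ) ▸ hF).comp_hasDerivAt (0 : ℝ) hasDerivAt_lineMap
  have hslope : ∀ᶠ t in 𝓝[>] (0 : ℝ), slope (F ∘ ℓ) 0 t < G a - G b :=
    hline.hasDerivWithinAt.limsup_slope_le' self_notMem_Ioi (sub_pos.2 hGab)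
  obtain ⟨t, hts, ht⟩ := (hslope.and (Ioo_mem_nhdsGT zero_lt_one)).exists
  refine ⟨ℓ t, ?_⟩
  have hFt : F (ℓ t) - F a < t * (G a - G b) := by
    rw [slope_def_field, sub_zero, div_lt_iff₀ ht.1] at hts
    simpa [ℓ, mul_comm] using hts
  have hGt := hG.map_lineMap_le (Ioo_subset_Icc_self ht)
  linarith

theorem mixture_minimizer_strictly_suboptimal_for_source_general
    {E : Type*} [NormedAddCommGroup E] [NormedSpace ℝ E]
    (f g : E → ℝ) (hfd : Differentiable ℝ f)
    (hfc : StrictConvexOn ℝ Set.univ f) (hgc : StrictConvexOn ℝ Set.univ g)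
    (a b : E) (ha : ∀ θ : E, f a ≤ f θ) (hb : ∀ θ : E, g b ≤ g θ) (hab : a ≠ b)
    (α : ℝ) (hα : α ∈ Set.Ioo (0 : ℝ) 1)
    (h : E → ℝ) (hdef : ∀ θ : E, h θ = α * f θ + (1 - α) * g θ)
    (θs : E) (hθs : ∀ θ : E, h θs ≤ h θ) :
    f θs > f a := by
  by_contra! hle
  obtain rfl : θs = a :=
    hfc.eq_of_isMinOn (fun x _ => hle.trans (ha x)) (fun x _ => ha x) trivial trivial
  have hf' : HasFDerivAt f 0 θs :=
    IsLocalMin.fderiv_eq_zero (f := f) (Eventually.of_forall ha) ▸ (hfd θs).hasFDerivAt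
  have hgba : g b < g θs := hgc.lt_of_isMinOn_of_ne trivial trivial (fun x _ => hb x) hab
  obtain ⟨θ, hθ⟩ := exists_add_lt_of_hasFDerivAt_zero_of_convexOn
    (by simpa using hf'.const_mul α)
    ((hgc.convexOn.subset (subset_univ _) (convex_segment _ _)).smul (sub_nonneg.2 hα.2.le))
    (mul_lt_mul_of_pos_left hgba (sub_pos.2 hα.2))
  have hmin := hθs θ
  simp only [hdef, smul_eq_mul] at hmin hθ
  linarith

/-- Paper's Theorem 1: if `θ*` globally minimizes the mixture loss
`h θ = α * f θ + (1 - α) * g θ` of two differentiable strictly convex losses with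
distinct global minimizers, then `θ*` is strictly suboptimal for the source loss `f`. -/
theorem mixture_minimizer_strictly_suboptimal_for_source
    {E : Type*} [NormedAddCommGroup E] [NormedSpace ℝ E]
    (f g : E → ℝ) (hfd : Differentiable ℝ f) (hgd : Differentiable ℝ g)
    (hfc : StrictConvexOn ℝ Set.univ f) (hgc : StrictConvexOn ℝ Set.univ g)
    (a b : E) (ha : ∀ θ : E, f a ≤ f θ) (hb : ∀ θ : E, g b ≤ g θ) (hab : a ≠ b)
    (α : ℝ) (hα : α ∈ Set.Ioo (0 : ℝ) 1)
    (h : E → ℝ) (hdef : ∀ θ : E, h θ = α * f θ + (1 - α) * g θ)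
    (θs : E) (hθs : ∀ θ : E, h θs ≤ h θ) :
    f θs > f a :=
  mixture_minimizer_strictly_suboptimal_for_source_general f g hfd hfc hgc a b ha hb hab α hα h hdef
    θs hθs
end

section
/- Let E be a real normed vector space and let f, g : E → ℝ be differentiable, strictly convex functions. Suppose a ∈ E is a global minimizer of f, b ∈ E is a global minimizer of g, and a ≠ b. Fix α ∈ (0,1) and define h : E → ℝ by h(θ) = α·f(θ) + (1−α)·g(θ). If θ* ∈ E is a global minimizer of h, then g(θ*) > g(b). -/
/-!
If `g θs ≤ g b`, then `θs` also minimizes `g`, so `θs = b` by strict convexity of `g`. At `b` the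
derivative of `g` vanishes, so `b` is a local minimizer of `α f` plus a function that is flat at `b`.
For a convex function that already forces a global minimum, hence `b` minimizes `f` and strict
convexity of `f` gives `a = b`.
-/

open Filter Set Topology

/-- On the segment from `x` to `y`, the secant slopes of `f` at `x` are at most `f y - f x` by
convexity, and at least minus those of `ψ` by local minimality; the latter tend to `0`. -/
theorem ConvexOn.isMinOn_of_isLocalMin_add_of_hasFDerivAt_zero {E : Type*}
    [NormedAddCommGroup E] [NormedSpace ℝ E] {f ψ : E → ℝ} {x : E}
    (hf : ConvexOn ℝ univ f) (hψ : HasFDerivAt ψ (0 : E →L[ℝ] ℝ) x)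
    (hmin : IsLocalMin (f + ψ) x) : IsMinOn f univ x := by
  intro y _
  let ℓ : ℝ →ᵃ[ℝ] E := AffineMap.lineMap x y
  have hℓ0 : ℓ 0 = x := AffineMap.lineMap_apply_zero x y
  have hℓ1 : ℓ 1 = y := AffineMap.lineMap_apply_one x y
  have hsecant : ∀ t ∈ Ioc (0 : ℝ) 1, slope (f ∘ ℓ) 0 t ≤ f y - f x := by
    intro t ⟨ht0, ht1⟩
    simpa [slope_def_field, hℓ0, hℓ1] using (hf.comp_affineMap ℓ).secant_mono trivial trivial
      trivial ht0.ne' one_ne_zero ht1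
  have hlocal : ∀ᶠ t in 𝓝[>] 0, -slope (ψ ∘ ℓ) 0 t ≤ slope (f ∘ ℓ) 0 t := by
    have hloc : IsLocalMin ((f + ψ) ∘ ℓ) 0 :=
      (hℓ0 ▸ hmin).comp_continuous AffineMap.lineMap_continuous.continuousAt
    filter_upwards [hloc.filter_mono nhdsWithin_le_nhds, self_mem_nhdsWithin] with t ht ht0
    simp only [Function.comp_apply, Pi.add_apply] at ht
    rw [slope_def_field, slope_def_field, ← neg_div,
      div_le_div_iff_of_pos_right (by simpa using ht0)]
    simp only [Function.comp_apply]
    linarith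
  have hψℓ : Tendsto (fun t => -slope (ψ ∘ ℓ) 0 t) (𝓝[>] 0) (𝓝 0) := by
    have : HasDerivAt (ψ ∘ ℓ) 0 0 := by
      simpa using (hℓ0 ▸ hψ).comp_hasDerivAt (0 : ℝ) AffineMap.hasDerivAt_lineMap
    simpa using (hasDerivAt_iff_tendsto_slope.mp this).neg.mono_left (nhdsGT_le_nhdsNE 0)
  have : (0 : ℝ) ≤ f y - f x := by
    refine le_of_tendsto hψℓ ?_
    filter_upwards [hlocal, Ioc_mem_nhdsGT one_pos] with t hψt ht
    exact hψt.trans (hsecant t ht)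
  exact sub_nonneg.mp this

theorem mixture_minimizer_strictly_suboptimal_for_target_general
    {E : Type*} [NormedAddCommGroup E] [NormedSpace ℝ E]
    (f g : E → ℝ) (hgd : Differentiable ℝ g)
    (hfc : StrictConvexOn ℝ Set.univ f) (hgc : StrictConvexOn ℝ Set.univ g)
    (a b : E) (ha : ∀ θ : E, f a ≤ f θ) (hb : ∀ θ : E, g b ≤ g θ) (hab : a ≠ b)
    (α : ℝ) (hα : α ∈ Set.Ioo (0 : ℝ) 1)
    (h : E → ℝ) (hdef : ∀ θ : E, h θ = α * f θ + (1 - α) * g θ)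
    (θs : E) (hθs : ∀ θ : E, h θs ≤ h θ) :
    g θs > g b := by
  by_contra! hle
  have hgb : IsMinOn g univ b := isMinOn_univ_iff.mpr hb
  have hθs_eq : θs = b := hgc.eq_of_isMinOn (fun θ _ => hle.trans (hb θ)) hgb trivial trivial
  subst hθs_eq
  have hg' : HasFDerivAt (fun θ => (1 - α) * g θ) (0 : E →L[ℝ] ℝ) θs := by
    have hgz : fderiv ℝ g θs = 0 := (hgb.isLocalMin univ_mem).fderiv_eq_zero
    simpa [hgz] using (hgd θs).hasFDerivAt.const_mul (1 - α)
  have hh : IsLocalMin ((fun θ => α * f θ) + fun θ => (1 - α) * g θ) θs := by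
    have hsum : h = (fun θ => α * f θ) + fun θ => (1 - α) * g θ := funext hdef
    exact hsum ▸ (isMinOn_univ_iff.mpr hθs).isLocalMin univ_mem
  have hαf : IsMinOn (fun θ => α * f θ) univ θs :=
    (hfc.convexOn.smul hα.1.le).isMinOn_of_isLocalMin_add_of_hasFDerivAt_zero hg' hh
  have hf : IsMinOn f univ θs := fun θ _ => le_of_mul_le_mul_left (hαf trivial) hα.1
  exact hab (hfc.eq_of_isMinOn (isMinOn_univ_iff.mpr ha) hf trivial trivial)

/-- Symmetric counterpart of the paper's Theorem 1: the global minimizer `θ*` of the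
mixture loss `h θ = α * f θ + (1 - α) * g θ` is strictly suboptimal for the target loss `g`. -/
theorem mixture_minimizer_strictly_suboptimal_for_target
    {E : Type*} [NormedAddCommGroup E] [NormedSpace ℝ E]
    (f g : E → ℝ) (hfd : Differentiable ℝ f) (hgd : Differentiable ℝ g)
    (hfc : StrictConvexOn ℝ Set.univ f) (hgc : StrictConvexOn ℝ Set.univ g)
    (a b : E) (ha : ∀ θ : E, f a ≤ f θ) (hb : ∀ θ : E, g b ≤ g θ) (hab : a ≠ b)
    (α : ℝ) (hα : α ∈ Set.Ioo (0 : ℝ) 1)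
    (h : E → ℝ) (hdef : ∀ θ : E, h θ = α * f θ + (1 - α) * g θ)
    (θs : E) (hθs : ∀ θ : E, h θs ≤ h θ) :
    g θs > g b :=
  mixture_minimizer_strictly_suboptimal_for_target_general f g hgd hfc hgc a b ha hb hab α hα h hdef
    θs hθs
end
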